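/- arXiv:2511.20628 — 3 statements merged into one kernel-verified Lean document; each statement's English description precedes it below -/
import Mathlib

section
/- Fix n ∈ ℕ₊ and 0 < p_tot ≤ 1. Among all random variables X = max(X₁, ..., Xₙ) with Xᵢ ~ geom(pᵢ) independent, 0 < pᵢ ≤ 1, and ∏ᵢ pᵢ = p_tot, the choice with all pᵢ equal to p_tot^{1/n} (the homogeneous case X_hom) is stochastically dominated by every other member: X ≥_st X_hom for all such X. -/
/-!
In the variable `x = log p`, the log-CDF `x ↦ log (1 - (1 - eˣ)^k)` of `geom(eˣ)` is concave on
`x ≤ 0`: with `t = 1 - eˣ` its derivative is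
`k t^(k-1) (1 - t) / (1 - t^k) = k t^(k-1) / (1 + t + ⋯ + t^(k-1))`, which increases with `t` and
hence decreases with `x`. Jensen's inequality at the points `log pᵢ`, whose mean is
`log (p_tot^(1/n))`, gives the claim after exponentiating.
-/

open Real Finset Set

theorem pow_mul_geom_sum_le_pow_mul_geom_sum {s t : ℝ} (hs : 0 ≤ s) (hst : s ≤ t) (m : ℕ) :
    s ^ m * ∑ j ∈ range (m + 1), t ^ j ≤ t ^ m * ∑ j ∈ range (m + 1), s ^ j := by
  have ht : 0 ≤ t := hs.trans hst
  rw [mul_sum, mul_sum]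
  refine sum_le_sum fun j hj => ?_
  obtain ⟨l, rfl⟩ : ∃ l, m = j + l := ⟨m - j, by grind⟩
  calc s ^ (j + l) * t ^ j = s ^ j * t ^ j * s ^ l := by ring
    _ ≤ s ^ j * t ^ j * t ^ l := by gcongr
    _ = t ^ (j + l) * s ^ j := by ring

theorem monotoneOn_pow_mul_one_sub_div_one_sub_pow (m : ℕ) :
    MonotoneOn (fun t : ℝ => t ^ m * (1 - t) / (1 - t ^ (m + 1))) (Ico 0 1) := by
  have h_eq : ∀ t ∈ Ico (0 : ℝ) 1,
      t ^ m * (1 - t) / (1 - t ^ (m + 1)) = t ^ m / ∑ j ∈ range (m + 1), t ^ j := by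
    intro t ht
    rw [← geom_sum_mul_neg, mul_div_mul_right _ _ (sub_ne_zero.2 ht.2.ne')]
  have h_sum_pos : ∀ t ∈ Ico (0 : ℝ) 1, 0 < ∑ j ∈ range (m + 1), t ^ j := fun t ht =>
    geom_sum_pos ht.1 m.succ_ne_zero
  intro s hs t ht hst
  simp only
  rw [h_eq s hs, h_eq t ht, div_le_div_iff₀ (h_sum_pos s hs) (h_sum_pos t ht)]
  exact pow_mul_geom_sum_le_pow_mul_geom_sum hs.1 hst m

theorem one_sub_one_sub_pow_pos {p : ℝ} (hp : 0 < p) (hp1 : p ≤ 1) {k : ℕ} (hk : k ≠ 0) :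
    0 < 1 - (1 - p) ^ k :=
  sub_pos.2 (pow_lt_one₀ (by linarith) (by linarith) hk)

theorem hasDerivAt_log_one_sub_one_sub_exp_pow {x : ℝ} (m : ℕ)
    (hx : 1 - (1 - exp x) ^ (m + 1) ≠ 0) :
    HasDerivAt (fun x => log (1 - (1 - exp x) ^ (m + 1)))
      ((m + 1) * ((1 - exp x) ^ m * (1 - (1 - exp x)) / (1 - (1 - exp x) ^ (m + 1)))) x := by
  convert ((((hasDerivAt_exp x).const_sub 1).pow (m + 1)).const_sub 1).log hx using 1
  · simp only [Pi.pow_apply]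
  · simp only [Pi.pow_apply, Nat.cast_succ, Nat.add_sub_cancel]
    ring

theorem concaveOn_log_one_sub_one_sub_exp_pow (m : ℕ) :
    ConcaveOn ℝ (Iic 0) (fun x => log (1 - (1 - exp x) ^ (m + 1))) := by
  have h_pos : ∀ x ∈ Iic (0 : ℝ), 0 < 1 - (1 - exp x) ^ (m + 1) := fun x hx =>
    one_sub_one_sub_pow_pos (exp_pos x) (exp_le_one_iff.2 hx) m.succ_ne_zero
  have h_deriv : ∀ x ∈ interior (Iic (0 : ℝ)), HasDerivAt _ _ x := fun x hx =>
    hasDerivAt_log_one_sub_one_sub_exp_pow m (h_pos x (interior_subset hx)).ne'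
  have h_mem : ∀ x ∈ Iic (0 : ℝ), 1 - exp x ∈ Ico (0 : ℝ) 1 := fun x hx =>
    ⟨sub_nonneg.2 (exp_le_one_iff.2 hx), sub_lt_self 1 (exp_pos x)⟩
  refine AntitoneOn.concaveOn_of_deriv (convex_Iic 0) ?_
    (fun x hx => (h_deriv x hx).differentiableAt.differentiableWithinAt) ?_
  · exact ContinuousOn.log (by fun_prop) fun x hx => (h_pos x hx).ne'
  · intro x hx y hy hxy
    rw [(h_deriv x hx).deriv, (h_deriv y hy).deriv]
    exact mul_le_mul_of_nonneg_left (monotoneOn_pow_mul_one_sub_div_one_sub_pow m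
      (h_mem y (interior_subset hy)) (h_mem x (interior_subset hx)) (by gcongr)) (by positivity)

theorem prod_one_sub_one_sub_pow_le {ι : Type*} (s : Finset ι) (p : ι → ℝ)
    (hp : ∀ i ∈ s, 0 < p i) (hp1 : ∀ i ∈ s, p i ≤ 1) (k : ℕ) :
    ∏ i ∈ s, (1 - (1 - p i) ^ k) ≤ (1 - (1 - (∏ i ∈ s, p i) ^ ((#s : ℝ)⁻¹)) ^ k) ^ #s := by
  rcases s.eq_empty_or_nonempty with rfl | hs
  · simp
  rcases k with _ | m
  · simp [hs.ne_empty]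
  set q := (∏ i ∈ s, p i) ^ ((#s : ℝ)⁻¹)
  have h_card : (0 : ℝ) < #s := by exact_mod_cast hs.card_pos
  have h_prod_pos : 0 < ∏ i ∈ s, p i := prod_pos hp
  have hq : 0 < q := rpow_pos_of_pos h_prod_pos _
  have hq1 : q ≤ 1 := rpow_le_one h_prod_pos.le
    (prod_le_one (fun i hi => (hp i hi).le) hp1) (by positivity)
  have h_log_q : ∑ i ∈ s, (#s : ℝ)⁻¹ • log (p i) = log q := by
    rw [log_rpow h_prod_pos, log_prod fun i hi => (hp i hi).ne', ← smul_sum, smul_eq_mul]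
  have h_jensen := (concaveOn_log_one_sub_one_sub_exp_pow m).le_map_sum
    (w := fun _ => (#s : ℝ)⁻¹) (p := fun i => log (p i)) (fun _ _ => by positivity)
    (by simp [h_card.ne']) fun i hi => log_nonpos (hp i hi).le (hp1 i hi)
  rw [h_log_q, exp_log hq, ← smul_sum, smul_eq_mul, inv_mul_le_iff₀ h_card] at h_jensen
  rw [← log_le_log_iff (prod_pos fun i hi => one_sub_one_sub_pow_pos (hp i hi) (hp1 i hi)
    m.succ_ne_zero) (pow_pos (one_sub_one_sub_pow_pos hq hq1 m.succ_ne_zero) _),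
    log_prod fun i hi => (one_sub_one_sub_pow_pos (hp i hi) (hp1 i hi) m.succ_ne_zero).ne',
    log_pow]
  refine (sum_congr rfl fun i hi => ?_).trans_le h_jensen
  rw [exp_log (hp i hi)]

theorem hom_dominates_general
    {n : ℕ} (ptot : ℝ)
    (p : Fin n → ℝ) (hp : ∀ i, 0 < p i) (hp1 : ∀ i, p i ≤ 1)
    (hprod : ∏ i, p i = ptot) (k : ℕ) :
    ∏ i, (1 - (1 - p i) ^ k) ≤ (1 - (1 - ptot ^ ((n : ℝ)⁻¹)) ^ k) ^ n := by
  subst hprod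
  simpa using prod_one_sub_one_sub_pow_le univ p (fun i _ => hp i) (fun i _ => hp1 i) k

/-- Among maxima of `n` independent geometric random variables with success
probabilities `pᵢ ∈ (0,1]` of fixed product `p_tot`, the homogeneous choice
`pᵢ = p_tot^(1/n)` is stochastically dominated by every member of the family:
its CDF `(1 - (1 - p_tot^(1/n))^k)^n` is pointwise largest. -/
theorem hom_dominates
    {n : ℕ} (hn : 0 < n) (ptot : ℝ) (h1 : 0 < ptot) (h2 : ptot ≤ 1)
    (p : Fin n → ℝ) (hp : ∀ i, 0 < p i) (hp1 : ∀ i, p i ≤ 1)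
    (hprod : ∏ i, p i = ptot) (k : ℕ) :
    ∏ i, (1 - (1 - p i) ^ k) ≤ (1 - (1 - ptot ^ ((n : ℝ)⁻¹)) ^ k) ^ n :=
  hom_dominates_general ptot p hp hp1 hprod k
end

section
/- For integers k ≥ 2 and reals 0 < r, s < 1, the quantity T = (1 - r^k)·s^{k-1}·(1-s) - (1 - s^k)·r^{k-1}·(1-r) factors as T = (s - r)(1 - s)·r^{k-1}·Σ_{i=0}^{k-2} s^i·(r^{-(1+i)} - 1). Consequently T = 0 if and only if r = s, and the sign of T equals the sign of s - r. -/
/-- Factorization of `T = (1 - r^k) s^(k-1) (1-s) - (1 - s^k) r^(k-1) (1-r)` for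
`k ≥ 2` and `0 < r, s < 1`, and the resulting sign characterization: `T = 0` iff
`r = s`, and the sign of `T` equals the sign of `s - r`. -/
theorem T_factorization_and_sign
    {k : ℕ} (hk : 2 ≤ k) {r s : ℝ} (hr : 0 < r) (hr1 : r < 1) (hs : 0 < s) (hs1 : s < 1) :
    ((1 - r ^ k) * s ^ (k - 1) * (1 - s) - (1 - s ^ k) * r ^ (k - 1) * (1 - r)
        = (s - r) * (1 - s) * r ^ (k - 1) *
            ∑ i ∈ Finset.range (k - 1), s ^ i * ((r ^ (i + 1))⁻¹ - 1)) ∧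
    ((1 - r ^ k) * s ^ (k - 1) * (1 - s) - (1 - s ^ k) * r ^ (k - 1) * (1 - r) = 0 ↔ r = s) ∧
    (0 < (1 - r ^ k) * s ^ (k - 1) * (1 - s) - (1 - s ^ k) * r ^ (k - 1) * (1 - r) ↔ r < s) ∧
    ((1 - r ^ k) * s ^ (k - 1) * (1 - s) - (1 - s ^ k) * r ^ (k - 1) * (1 - r) < 0 ↔ s < r) := by
  obtain ⟨m, rfl⟩ : ∃ m, k = m + 1 := ⟨k - 1, by omega⟩
  have hm : 1 ≤ m := by omega
  simp only [Nat.add_sub_cancel]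
  have hr0 : r ≠ 0 := ne_of_gt hr
  set S := ∑ i ∈ Finset.range m, s ^ i * ((r ^ (i + 1))⁻¹ - 1) with hS
  have hsum : r ^ m * S
      = (∑ i ∈ Finset.range m, s ^ i * r ^ (m - 1 - i)) - r ^ m * ∑ i ∈ Finset.range m, s ^ i := by
    rw [hS, Finset.mul_sum, Finset.mul_sum, ← Finset.sum_sub_distrib]
    apply Finset.sum_congr rfl
    intro i hi
    have hi' : i + 1 ≤ m := Finset.mem_range.mp hi
    have hpow : r ^ m = r ^ (m - 1 - i) * r ^ (i + 1) := by
      rw [← pow_add]; congr 1; omega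
    rw [hpow]
    field_simp
  have h1 : (∑ i ∈ Finset.range m, s ^ i * r ^ (m - 1 - i)) * (s - r) = s ^ m - r ^ m :=
    geom_sum₂_mul s r m
  have h2 : (∑ i ∈ Finset.range m, s ^ i) * (s - 1) = s ^ m - 1 := geom_sum_mul s m
  have hfact : (1 - r ^ (m + 1)) * s ^ m * (1 - s) - (1 - s ^ (m + 1)) * r ^ m * (1 - r)
      = (s - r) * (1 - s) * r ^ m * S := by
    linear_combination (-(s - r) * (1 - s)) * hsum + (-(1 - s)) * h1 - r ^ m * (s - r) * h2
  have hSpos : 0 < S := by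
    rw [hS]
    apply Finset.sum_pos
    · intro i _
      have h1r : r ^ (i + 1) < 1 := pow_lt_one₀ hr.le hr1 (Nat.succ_ne_zero i)
      have h1inv : 1 < (r ^ (i + 1))⁻¹ := (one_lt_inv₀ (pow_pos hr _)).mpr h1r
      exact mul_pos (pow_pos hs i) (by linarith)
    · exact ⟨0, Finset.mem_range.mpr (by omega)⟩
  have hC : 0 < (1 - s) * (r ^ m * S) := mul_pos (by linarith) (mul_pos (pow_pos hr m) hSpos)
  rw [hfact]
  refine ⟨rfl, ?_, ?_, ?_⟩
  · constructor
    · intro h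
      nlinarith [hC, sq_nonneg (s - r)]
    · rintro rfl; ring
  · constructor <;> intro h <;> nlinarith [hC]
  · constructor <;> intro h <;> nlinarith [hC]
end

section
/- For a repeater chain of N+2 nodes spanning total length L > 0 with segment lengths ℓ₀, ..., ℓ_N > 0 summing to L, where link i succeeds each round with probability pᵢ = 10^{-(α/10)·ℓᵢ} (α > 0), the product of success probabilities ∏ᵢ pᵢ = 10^{-(α/10)·L} is independent of the partition, and the expected number of rounds E[max(X₁,...,X_{N+1})] with Xᵢ ~ geom(pᵢ) independent is minimized when all ℓᵢ = L/(N+1). -/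
/-!
Write `pᵢ = e^{-tᵢ}` with `tᵢ = (α/10) ℓᵢ log 10`, so that the partition enters only through the
`tᵢ`, whose sum is fixed. Since `E[max Xᵢ] = ∑ₖ (1 - ∏ᵢ (1 - (1 - pᵢ)^k))`, it suffices to bound each
factor product `∏ᵢ (1 - (1 - e^{-tᵢ})^k)` by its value at the mean of the `tᵢ`. This is Jensen's
inequality for `t ↦ log (1 - (1 - e^{-t})^k)`, which is concave on `(0, ∞)`: with `u = 1 - e^{-t}`
its derivative is `-k / ∑_{j<k} u^{j-(k-1)}`, which decreases as `u` increases. Both series converge,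
being dominated by geometric series through `1 - ∏ᵢ (1 - xᵢ) ≤ ∑ᵢ xᵢ`.
-/

open Real Finset

theorem one_sub_sum_le_prod_one_sub {ι : Type*} (s : Finset ι) {x : ι → ℝ}
    (h0 : ∀ i ∈ s, 0 ≤ x i) (h1 : ∀ i ∈ s, x i ≤ 1) :
    1 - ∑ i ∈ s, x i ≤ ∏ i ∈ s, (1 - x i) := by
  induction s using Finset.cons_induction with
  | empty => simp
  | cons a s ha ih =>
    simp only [forall_mem_cons] at h0 h1
    rw [prod_cons, sum_cons]
    have hP : ∏ i ∈ s, (1 - x i) ≤ 1 :=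
      prod_le_one (fun i hi => sub_nonneg.2 (h1.2 i hi)) (fun i hi => sub_le_self _ (h0.2 i hi))
    nlinarith [ih h0.2 h1.2, mul_nonneg h0.1 (sub_nonneg.2 hP)]

theorem summable_one_sub_prod_one_sub_pow {ι : Type*} (s : Finset ι) {p : ι → ℝ}
    (hp0 : ∀ i ∈ s, 0 < p i) (hp1 : ∀ i ∈ s, p i ≤ 1) :
    Summable fun k : ℕ => 1 - ∏ i ∈ s, (1 - (1 - p i) ^ k) := by
  have hq0 : ∀ i ∈ s, 0 ≤ 1 - p i := fun i hi => sub_nonneg.2 (hp1 i hi)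
  have hq1 : ∀ i ∈ s, 1 - p i < 1 := fun i hi => sub_lt_self 1 (hp0 i hi)
  refine Summable.of_nonneg_of_le (fun k => ?_) (fun k => ?_)
    (summable_sum fun i hi => summable_geometric_of_lt_one (hq0 i hi) (hq1 i hi))
  · exact sub_nonneg.2 <| prod_le_one
      (fun i hi => sub_nonneg.2 (pow_le_one₀ (hq0 i hi) (hq1 i hi).le))
      (fun i hi => sub_le_self _ (pow_nonneg (hq0 i hi) k))
  · linarith [one_sub_sum_le_prod_one_sub s (fun i hi => pow_nonneg (hq0 i hi) k)
      (fun i hi => pow_le_one₀ (hq0 i hi) (hq1 i hi).le)]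

theorem prod_le_pow_mean_of_concaveOn_log {ι : Type*} {D : Set ℝ} {f : ℝ → ℝ}
    (hf : ConcaveOn ℝ D fun x => log (f x)) (hpos : ∀ x ∈ D, 0 < f x)
    {s : Finset ι} (hs : s.Nonempty) {t : ι → ℝ} (ht : ∀ i ∈ s, t i ∈ D) :
    ∏ i ∈ s, f (t i) ≤ f ((∑ i ∈ s, t i) / #s) ^ #s := by
  have hn : (0 : ℝ) < #s := by exact_mod_cast hs.card_pos
  have hw : ∑ _i ∈ s, (#s : ℝ)⁻¹ = 1 := by
    rw [sum_const, nsmul_eq_mul, mul_inv_cancel₀ hn.ne']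
  have hmean : ∑ i ∈ s, (#s : ℝ)⁻¹ • t i = (∑ i ∈ s, t i) / #s := by
    rw [← smul_sum, smul_eq_mul, inv_mul_eq_div]
  have hjensen := hf.le_map_sum (fun _ _ => inv_nonneg.2 hn.le) hw ht
  rw [hmean, ← smul_sum, smul_eq_mul, inv_mul_le_iff₀ hn] at hjensen
  have hmeanD : (∑ i ∈ s, t i) / #s ∈ D := hmean ▸ hf.1.sum_mem (fun _ _ => inv_nonneg.2 hn.le) hw ht
  calc ∏ i ∈ s, f (t i) = ∏ i ∈ s, exp (log (f (t i))) :=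
        prod_congr rfl fun i hi => (exp_log (hpos _ (ht i hi))).symm
    _ = exp (∑ i ∈ s, log (f (t i))) := (exp_sum _ _).symm
    _ ≤ exp (#s * log (f ((∑ i ∈ s, t i) / #s))) := exp_le_exp.2 hjensen
    _ = f ((∑ i ∈ s, t i) / #s) ^ #s := by rw [exp_nat_mul, exp_log (hpos _ hmeanD)]

theorem antitoneOn_geom_sum_div_pow (k : ℕ) :
    AntitoneOn (fun u : ℝ => (∑ j ∈ range k, u ^ j) / u ^ (k - 1)) (Set.Ioi 0) := by
  intro u hu v hv huv
  simp only [sum_div]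
  refine sum_le_sum fun j hj => ?_
  have hjk : j ≤ k - 1 := Nat.le_sub_one_of_lt (mem_range.1 hj)
  have hpow : ∀ w : ℝ, w ≠ 0 → w ^ j / w ^ (k - 1) = (w ^ (k - 1 - j))⁻¹ := fun w hw => by
    rw [pow_sub₀ w hw hjk, mul_inv, inv_inv, div_eq_mul_inv, mul_comm]
  rw [hpow u (ne_of_gt hu), hpow v (ne_of_gt hv)]
  exact inv_anti₀ (pow_pos hu _) (pow_le_pow_left₀ (le_of_lt hu) huv _)

theorem one_sub_exp_neg_mem_Ioo {t : ℝ} (ht : 0 < t) : 1 - exp (-t) ∈ Set.Ioo 0 1 :=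
  ⟨sub_pos.2 (exp_lt_one_iff.2 (neg_lt_zero.2 ht)), sub_lt_self 1 (exp_pos _)⟩

theorem one_sub_one_sub_exp_neg_pow_pos {k : ℕ} (hk : k ≠ 0) {t : ℝ} (ht : 0 < t) :
    0 < 1 - (1 - exp (-t)) ^ k :=
  have hu := one_sub_exp_neg_mem_Ioo ht
  sub_pos.2 (pow_lt_one₀ hu.1.le hu.2 hk)

theorem hasDerivAt_log_one_sub_one_sub_exp_neg_pow {k : ℕ} (hk : k ≠ 0) {t : ℝ} (ht : 0 < t) :
    HasDerivAt (fun t => log (1 - (1 - exp (-t)) ^ k))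
      (-k / ((∑ j ∈ range k, (1 - exp (-t)) ^ j) / (1 - exp (-t)) ^ (k - 1))) t := by
  have hu : HasDerivAt (fun t => 1 - exp (-t)) (exp (-t)) t := by
    simpa using ((hasDerivAt_neg t).exp).const_sub 1
  refine ((hu.pow k).const_sub 1).log (one_sub_one_sub_exp_neg_pow_pos hk ht).ne' |>.congr_deriv ?_
  simp only [Pi.pow_apply]
  set u := 1 - exp (-t)
  have hu0 : 0 < u := (one_sub_exp_neg_mem_Ioo ht).1
  have he : exp (-t) = 1 - u := by ring
  have hS : 0 < ∑ j ∈ range k, u ^ j :=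
    sum_pos (fun j _ => pow_pos hu0 j) (nonempty_range_iff.2 hk)
  have he0 := (exp_pos (-t)).ne'
  have hS0 := hS.ne'
  rw [← mul_neg_geom_sum, ← he]
  field_simp

theorem concaveOn_log_one_sub_one_sub_exp_neg_pow {k : ℕ} (hk : k ≠ 0) :
    ConcaveOn ℝ (Set.Ioi 0) fun t => log (1 - (1 - exp (-t)) ^ k) := by
  have hderiv := fun t (ht : t ∈ Set.Ioi 0) =>
    hasDerivAt_log_one_sub_one_sub_exp_neg_pow hk (Set.mem_Ioi.1 ht)
  refine AntitoneOn.concaveOn_of_deriv (convex_Ioi 0)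
    (fun t ht => (hderiv t ht).continuousAt.continuousWithinAt) ?_ ?_ <;> rw [interior_Ioi]
  · exact fun t ht => (hderiv t ht).differentiableAt.differentiableWithinAt
  · intro s hs t ht hst
    have hus := (one_sub_exp_neg_mem_Ioo hs).1
    have hut := (one_sub_exp_neg_mem_Ioo ht).1
    rw [(hderiv s hs).deriv, (hderiv t ht).deriv, neg_div, neg_div, neg_le_neg_iff]
    refine div_le_div_of_nonneg_left k.cast_nonneg
      (div_pos (sum_pos (fun j _ => pow_pos hut j) (nonempty_range_iff.2 hk)) (pow_pos hut _))
      (antitoneOn_geom_sum_div_pow k hus hut ?_)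
    exact sub_le_sub_left (exp_le_exp.2 (neg_le_neg hst)) 1

theorem prod_one_sub_one_sub_exp_neg_pow_le {ι : Type*} {s : Finset ι} (hs : s.Nonempty)
    {t : ι → ℝ} (ht : ∀ i ∈ s, 0 < t i) (k : ℕ) :
    ∏ i ∈ s, (1 - (1 - exp (-t i)) ^ k)
      ≤ (1 - (1 - exp (-((∑ i ∈ s, t i) / #s))) ^ k) ^ #s := by
  rcases eq_or_ne k 0 with rfl | hk
  · simp [zero_pow hs.card_pos.ne']
  · exact prod_le_pow_mean_of_concaveOn_log (concaveOn_log_one_sub_one_sub_exp_neg_pow hk)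
      (fun _ hx => one_sub_one_sub_exp_neg_pow_pos hk hx) hs ht

/-- For a repeater chain of `N + 2` nodes spanning total length `L > 0` with
segment lengths `ℓᵢ > 0` summing to `L` and per-round link success probabilities
`pᵢ = 10^(-(α/10)ℓᵢ)`: the product `∏ pᵢ = 10^(-(α/10)L)` is independent of the
partition, and the expected number of rounds `E[max Xᵢ]` (with `Xᵢ ~ geom(pᵢ)`
independent, computed as `Σ_k Pr(max > k)`) is minimized by the equidistant
placement `ℓᵢ = L/(N+1)`. -/
theorem rate_optimal_for_hom_chain
    {N : ℕ} (α L : ℝ) (hα : 0 < α) (hL : 0 < L)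
    (ℓ : Fin (N + 1) → ℝ) (hℓ : ∀ i, 0 < ℓ i) (hsum : ∑ i, ℓ i = L)
    (p : Fin (N + 1) → ℝ) (hp : ∀ i, p i = (10 : ℝ) ^ (-(α / 10) * ℓ i)) :
    (∏ i, p i = (10 : ℝ) ^ (-(α / 10) * L)) ∧
    (∑' k : ℕ, (1 - (1 - (1 - (10 : ℝ) ^ (-(α / 10) * (L / (N + 1)))) ^ k) ^ (N + 1))
        ≤ ∑' k : ℕ, (1 - ∏ i, (1 - (1 - p i) ^ k))) := by
  have h10 : (0 : ℝ) < 10 := by norm_num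
  have hprob : ∀ x : ℝ, 0 ≤ x → 0 < (10 : ℝ) ^ (-(α / 10) * x) ∧ (10 : ℝ) ^ (-(α / 10) * x) ≤ 1 :=
    fun x hx => ⟨rpow_pos_of_pos h10 _, rpow_le_one_of_one_le_of_nonpos (by norm_num)
      (mul_nonpos_of_nonpos_of_nonneg (by linarith) hx)⟩
  have hexp : ∀ x : ℝ, (10 : ℝ) ^ (-(α / 10) * x) = exp (-(α / 10 * log 10 * x)) := fun x => by
    rw [rpow_def_of_pos h10]; ring_nf
  have hmean :
      α / 10 * log 10 * (L / (N + 1)) = (∑ i, α / 10 * log 10 * ℓ i) / ((N + 1 : ℕ) : ℝ) := by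
    rw [← mul_sum, hsum]; push_cast; ring
  refine ⟨by rw [prod_congr rfl fun i _ => hp i, ← rpow_sum_of_pos h10, ← mul_sum, hsum], ?_⟩
  refine Summable.tsum_le_tsum (fun k => sub_le_sub_left ?_ 1) ?_ ?_
  · have hround := prod_one_sub_one_sub_exp_neg_pow_le univ_nonempty
      (t := fun i => α / 10 * log 10 * ℓ i) (fun i _ => by have := hℓ i; positivity) k
    rw [card_univ, Fintype.card_fin] at hround
    simpa only [hp, hexp, hmean] using hround
  · have hq := hprob (L / (N + 1)) (by positivity)
    simpa only [prod_const, card_univ, Fintype.card_fin] using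
      summable_one_sub_prod_one_sub_pow (univ : Finset (Fin (N + 1))) (fun _ _ => hq.1)
        (fun _ _ => hq.2)
  · exact summable_one_sub_prod_one_sub_pow univ (fun i _ => (hp i ▸ hprob _ (hℓ i).le).1)
      (fun i _ => (hp i ▸ hprob _ (hℓ i).le).2)
end
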